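/- Let b : E → ℝ² be a bounded measurable vector field with sup_E |b| ≤ b_max, and let k ≥ 1 be an integer. For p ∈ L²(E;ℝ) and q : ℝ² → ℝ continuously differentiable, set b(p,q) := −∫_E p · (b · ∇q) dx and b_h(p,q) := −∫_E (Π⁰_{k−1} p) · (b · Π⁰_{k−1} ∇q) dx. Then b_h(p,q) − b(p,q) ≤ ℰ_{k−1}(b · ∇q) · ℰ_{k−1}(p) + ℰ_{k−1}(∇q) · ℰ_{k−1}(b p) + b_max · ℰ_{k−1}(∇q) · ℰ_{k−1}(p). -/

import Mathlib

open MeasureTheory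
open scoped RealInnerProductSpace

noncomputable section

abbrev Plane := EuclideanSpace ℝ (Fin 2)

/-- `f` is (the restriction of) a real polynomial function on `ℝ²` of total degree at most `m`. -/
def IsPolyDeg (m : ℕ) (f : Plane → ℝ) : Prop :=
  ∃ P : MvPolynomial (Fin 2) ℝ, P.totalDegree ≤ m ∧ ∀ x, f x = MvPolynomial.eval (fun i => x i) P

/-- `Pf` is the `L²(E)`-orthogonal projection of `f` onto the space of polynomial
functions of total degree `≤ m`: it is such a polynomial and the error is
`L²(E)`-orthogonal to all such polynomials. -/
def IsL2Proj (E : Set Plane) (m : ℕ) (f Pf : Plane → ℝ) : Prop :=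
  IsPolyDeg m Pf ∧ ∀ g : Plane → ℝ, IsPolyDeg m g → ∫ x in E, (f x - Pf x) * g x = 0

/-- Componentwise `L²(E)`-projection for `ℝ²`-valued functions. -/
def IsL2ProjV (E : Set Plane) (m : ℕ) (f Pf : Plane → Plane) : Prop :=
  ∀ i : Fin 2, IsL2Proj E m (fun x => f x i) (fun x => Pf x i)

/-- `ℰ_m(f) = ‖f - Π⁰_m f‖_{L²(E)}` for a scalar function, where `Pf = Π⁰_m f`. -/
def errS (E : Set Plane) (f Pf : Plane → ℝ) : ℝ :=
  Real.sqrt (∫ x in E, (f x - Pf x) ^ 2)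

/-- `ℰ_m(f) = ‖f - Π⁰_m f‖_{L²(E)}` for an `ℝ²`-valued function, where `Pf = Π⁰_m f`. -/
def errV (E : Set Plane) (f Pf : Plane → Plane) : ℝ :=
  Real.sqrt (∫ x in E, ‖f x - Pf x‖ ^ 2)

/-- `L²(E)` norm of a scalar function. -/
def l2normS (E : Set Plane) (f : Plane → ℝ) : ℝ :=
  Real.sqrt (∫ x in E, (f x) ^ 2)

/-- `L²(E)` norm of an `ℝ²`-valued function. -/
def l2normV (E : Set Plane) (f : Plane → Plane) : ℝ :=
  Real.sqrt (∫ x in E, ‖f x‖ ^ 2)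

/-! With `e(f) := f - Π⁰_{k-1} f`, pointwise
`p (b·∇q) - Π⁰p (b·Π⁰∇q) = e(p) e(b·∇q) + e(p b)·e(∇q) - e(p) (b·e(∇q))`
`  + e(p) Π⁰(b·∇q) + e(∇q)·Π⁰(p b)`,
and the last two terms integrate to zero over `E` because projection errors are
`L²(E)`-orthogonal to polynomials. Cauchy–Schwarz in `L²(E)` (with `|b| ≤ b_max` for the
third term) bounds the remaining three integrals. -/

namespace MeasureTheory

variable {α F : Type*} [MeasurableSpace α] {μ : Measure α}
  [NormedAddCommGroup F] [InnerProductSpace ℝ F]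

theorem MemLp.integrable_inner {u v : α → F} (hu : MemLp u 2 μ) (hv : MemLp v 2 μ) :
    Integrable (fun x => ⟪u x, v x⟫) μ :=
  (L2.integrable_inner (𝕜 := ℝ) (hu.toLp u) (hv.toLp v)).congr <| by
    filter_upwards [hu.coeFn_toLp, hv.coeFn_toLp] with x hux hvx
    rw [hux, hvx]

theorem integral_inner_le_sqrt_mul_sqrt {u v : α → F} (hu : MemLp u 2 μ) (hv : MemLp v 2 μ) :
    ∫ x, ⟪u x, v x⟫ ∂μ ≤ √(∫ x, ‖u x‖ ^ 2 ∂μ) * √(∫ x, ‖v x‖ ^ 2 ∂μ) := by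
  have hnorm : ∀ {w : α → F} (hw : MemLp w 2 μ), ‖hw.toLp w‖ = √(∫ x, ‖w x‖ ^ 2 ∂μ) := by
    intro w hw
    rw [← Real.sqrt_sq (norm_nonneg _), ← real_inner_self_eq_norm_sq, L2.inner_def]
    congr 1
    refine integral_congr_ae ?_
    filter_upwards [hw.coeFn_toLp] with x hx
    rw [hx, real_inner_self_eq_norm_sq]
  have hinner : ∫ x, ⟪u x, v x⟫ ∂μ = ⟪hu.toLp u, hv.toLp v⟫ := by
    rw [L2.inner_def]
    refine integral_congr_ae ?_
    filter_upwards [hu.coeFn_toLp, hv.coeFn_toLp] with x hux hvx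
    rw [hux, hvx]
  rw [hinner, ← hnorm hu, ← hnorm hv]
  exact real_inner_le_norm _ _

theorem integral_mul_le_sqrt_mul_sqrt {u v : α → ℝ} (hu : MemLp u 2 μ) (hv : MemLp v 2 μ) :
    ∫ x, u x * v x ∂μ ≤ √(∫ x, u x ^ 2 ∂μ) * √(∫ x, v x ^ 2 ∂μ) := by
  simpa only [Real.inner_apply, Real.norm_eq_abs, sq_abs] using
    integral_inner_le_sqrt_mul_sqrt hu hv

theorem MemLp.inner_of_bound {b v : α → F} {C : ℝ} (hb : AEStronglyMeasurable b μ)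
    (hbC : ∀ᵐ x ∂μ, ‖b x‖ ≤ C) (hv : MemLp v 2 μ) : MemLp (fun x => ⟪b x, v x⟫) 2 μ :=
  (hv.norm.const_mul C).of_le (hb.inner hv.1) <| by
    filter_upwards [hbC] with x hx
    calc ‖⟪b x, v x⟫‖ ≤ ‖b x‖ * ‖v x‖ := norm_inner_le_norm _ _
    _ ≤ C * ‖v x‖ := by gcongr
    _ ≤ ‖C * ‖v x‖‖ := le_abs_self _

theorem abs_integral_mul_inner_le {u : α → ℝ} {b v : α → F} {C : ℝ} (hC : 0 ≤ C)
    (hb : AEStronglyMeasurable b μ) (hbC : ∀ᵐ x ∂μ, ‖b x‖ ≤ C)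
    (hu : MemLp u 2 μ) (hv : MemLp v 2 μ) :
    |∫ x, u x * ⟪b x, v x⟫ ∂μ| ≤ C * √(∫ x, ‖v x‖ ^ 2 ∂μ) * √(∫ x, u x ^ 2 ∂μ) := by
  calc |∫ x, u x * ⟪b x, v x⟫ ∂μ| ≤ ∫ x, |u x * ⟪b x, v x⟫| ∂μ := abs_integral_le_integral_abs
  _ ≤ ∫ x, C * (‖v x‖ * ‖u x‖) ∂μ := by
    refine integral_mono_ae (hu.integrable_mul (hv.inner_of_bound hb hbC)).abs
      ((hv.norm.integrable_mul hu.norm).const_mul C) ?_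
    filter_upwards [hbC] with x hx
    calc |u x * ⟪b x, v x⟫| = ‖u x‖ * ‖⟪b x, v x⟫‖ := abs_mul _ _
    _ ≤ ‖u x‖ * (‖b x‖ * ‖v x‖) := by gcongr; exact norm_inner_le_norm _ _
    _ ≤ ‖u x‖ * (C * ‖v x‖) := by gcongr
    _ = C * (‖v x‖ * ‖u x‖) := by ring
  _ ≤ C * (√(∫ x, ‖v x‖ ^ 2 ∂μ) * √(∫ x, u x ^ 2 ∂μ)) := by
    rw [integral_const_mul]
    gcongr
    simpa only [Real.norm_eq_abs, sq_abs] using integral_mul_le_sqrt_mul_sqrt hv.norm hu.norm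
  _ = _ := (mul_assoc _ _ _).symm

theorem integral_mul_inner_sub_integral_mul_inner
    {b g Pg Pw : α → F} {p Pp Ps : α → ℝ} {C : ℝ}
    (hb : AEStronglyMeasurable b μ) (hbC : ∀ᵐ x ∂μ, ‖b x‖ ≤ C)
    (hp : MemLp p 2 μ) (hPp : MemLp Pp 2 μ) (hg : MemLp g 2 μ) (hPg : MemLp Pg 2 μ)
    (hPw : MemLp Pw 2 μ) (hPs : MemLp Ps 2 μ)
    (hp_orth : ∫ x, (p x - Pp x) * Ps x ∂μ = 0)
    (hg_orth : ∫ x, ⟪g x - Pg x, Pw x⟫ ∂μ = 0) :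
    ∫ x, p x * ⟪b x, g x⟫ ∂μ - ∫ x, Pp x * ⟪b x, Pg x⟫ ∂μ =
      ∫ x, (p x - Pp x) * (⟪b x, g x⟫ - Ps x) ∂μ + ∫ x, ⟪p x • b x - Pw x, g x - Pg x⟫ ∂μ
        - ∫ x, (p x - Pp x) * ⟪b x, g x - Pg x⟫ ∂μ := by
  have hpb : MemLp (fun x => p x • b x) 2 μ := (memLp_top_of_bound hb C hbC).smul hp
  have iA : Integrable (fun x => (p x - Pp x) * (⟪b x, g x⟫ - Ps x)) μ :=
    (hp.sub hPp).integrable_mul ((hg.inner_of_bound hb hbC).sub hPs)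
  have iB : Integrable (fun x => ⟪p x • b x - Pw x, g x - Pg x⟫) μ :=
    (hpb.sub hPw).integrable_inner (hg.sub hPg)
  have iC : Integrable (fun x => (p x - Pp x) * ⟪b x, g x - Pg x⟫) μ :=
    (hp.sub hPp).integrable_mul ((hg.sub hPg).inner_of_bound hb hbC)
  have iZ₁ : Integrable (fun x => (p x - Pp x) * Ps x) μ := (hp.sub hPp).integrable_mul hPs
  have iZ₂ : Integrable (fun x => ⟪g x - Pg x, Pw x⟫) μ := (hg.sub hPg).integrable_inner hPw
  have hsplit : ∀ x, p x * ⟪b x, g x⟫ - Pp x * ⟪b x, Pg x⟫ =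
      ((p x - Pp x) * (⟪b x, g x⟫ - Ps x) + ⟪p x • b x - Pw x, g x - Pg x⟫
        - (p x - Pp x) * ⟪b x, g x - Pg x⟫) + ((p x - Pp x) * Ps x + ⟪g x - Pg x, Pw x⟫) := by
    intro x
    simp only [inner_sub_left, inner_sub_right, real_inner_smul_left, real_inner_comm (Pw x)]
    ring
  rw [← integral_sub ?_ ?_, integral_congr_ae (ae_of_all _ hsplit),
    integral_add (by fun_prop) (by fun_prop), integral_add iZ₁ iZ₂, hp_orth, hg_orth,
    add_zero, add_zero, integral_sub (by fun_prop) iC, integral_add iA iB]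
  · exact hp.integrable_mul (hg.inner_of_bound hb hbC)
  · exact hPp.integrable_mul (hPg.inner_of_bound hb hbC)

theorem integral_mul_inner_sub_integral_mul_inner_le
    {b g Pg Pw : α → F} {p Pp Ps : α → ℝ} {C : ℝ} (hC : 0 ≤ C)
    (hb : AEStronglyMeasurable b μ) (hbC : ∀ᵐ x ∂μ, ‖b x‖ ≤ C)
    (hp : MemLp p 2 μ) (hPp : MemLp Pp 2 μ) (hg : MemLp g 2 μ) (hPg : MemLp Pg 2 μ)
    (hPw : MemLp Pw 2 μ) (hPs : MemLp Ps 2 μ)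
    (hp_orth : ∫ x, (p x - Pp x) * Ps x ∂μ = 0)
    (hg_orth : ∫ x, ⟪g x - Pg x, Pw x⟫ ∂μ = 0) :
    ∫ x, p x * ⟪b x, g x⟫ ∂μ - ∫ x, Pp x * ⟪b x, Pg x⟫ ∂μ ≤
      √(∫ x, (⟪b x, g x⟫ - Ps x) ^ 2 ∂μ) * √(∫ x, (p x - Pp x) ^ 2 ∂μ)
        + √(∫ x, ‖g x - Pg x‖ ^ 2 ∂μ) * √(∫ x, ‖p x • b x - Pw x‖ ^ 2 ∂μ)
        + C * √(∫ x, ‖g x - Pg x‖ ^ 2 ∂μ) * √(∫ x, (p x - Pp x) ^ 2 ∂μ) := by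
  have hpb : MemLp (fun x => p x • b x) 2 μ := (memLp_top_of_bound hb C hbC).smul hp
  rw [integral_mul_inner_sub_integral_mul_inner hb hbC hp hPp hg hPg hPw hPs hp_orth hg_orth,
    sub_eq_add_neg]
  gcongr ?_ + ?_ + ?_
  · exact (integral_mul_le_sqrt_mul_sqrt (hp.sub hPp) ((hg.inner_of_bound hb hbC).sub hPs)).trans_eq
      (mul_comm _ _)
  · exact (integral_inner_le_sqrt_mul_sqrt (hpb.sub hPw) (hg.sub hPg)).trans_eq (mul_comm _ _)
  · exact (neg_le_abs _).trans (abs_integral_mul_inner_le hC hb hbC (hp.sub hPp) (hg.sub hPg))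

theorem _root_.Continuous.memLp_restrict_of_isBounded {X F : Type*} [PseudoMetricSpace X]
    [ProperSpace X] [MeasurableSpace X] [OpensMeasurableSpace X] [NormedAddCommGroup F]
    {μ : Measure X} [IsFiniteMeasureOnCompacts μ] {f : X → F} (hf : Continuous f) {E : Set X}
    (hE : Bornology.IsBounded E) (r : ENNReal) : MemLp f r (μ.restrict E) := by
  have hK : IsCompact (closure E) := hE.isCompact_closure
  have : IsFiniteMeasure (μ.restrict (closure E)) := isFiniteMeasure_restrict.2 hK.measure_lt_top.ne
  obtain ⟨C, hC⟩ := hK.exists_bound_of_continuousOn hf.continuousOn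
  refine (MemLp.of_bound hf.aestronglyMeasurable C ?_).mono_measure
    (Measure.restrict_mono subset_closure le_rfl)
  exact ae_restrict_of_forall_mem isClosed_closure.measurableSet hC

end MeasureTheory

theorem ContDiff.continuous_gradient {F : Type*} [NormedAddCommGroup F] [InnerProductSpace ℝ F]
    [CompleteSpace F] {q : F → ℝ} {n : WithTop ℕ∞} (hq : ContDiff ℝ n q) (hn : n ≠ 0) :
    Continuous (gradient q) :=
  (InnerProductSpace.toDual ℝ F).symm.continuous.comp (hq.continuous_fderiv hn)

theorem IsPolyDeg.continuous {m : ℕ} {f : Plane → ℝ} (h : IsPolyDeg m f) : Continuous f := by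
  obtain ⟨P, -, hP⟩ := h
  rw [funext hP]
  exact (MvPolynomial.continuous_eval P).comp (PiLp.continuous_ofLp 2 _)

theorem IsL2ProjV.continuous {E : Set Plane} {m : ℕ} {f Pf : Plane → Plane}
    (h : IsL2ProjV E m f Pf) : Continuous Pf :=
  (PiLp.continuous_toLp 2 _).comp (continuous_pi fun i => (h i).1.continuous)

theorem IsL2ProjV.integral_inner_eq_zero {E : Set Plane} {m : ℕ} {f Pf g : Plane → Plane}
    (h : IsL2ProjV E m f Pf) (hg : ∀ i, IsPolyDeg m fun x => g x i)
    (hf : MemLp f 2 (volume.restrict E)) (hPf : MemLp Pf 2 (volume.restrict E))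
    (hgL2 : MemLp g 2 (volume.restrict E)) :
    ∫ x in E, ⟪f x - Pf x, g x⟫ = 0 := by
  have hcomp : ∀ {u : Plane → Plane}, MemLp u 2 (volume.restrict E) → ∀ i,
      MemLp (fun x => u x i) 2 (volume.restrict E) :=
    fun hu i => (EuclideanSpace.proj i : Plane →L[ℝ] ℝ).comp_memLp' hu
  simp only [PiLp.inner_apply, Real.inner_apply, PiLp.sub_apply]
  rw [integral_finsetSum _ fun i _ => ?_]
  · exact Finset.sum_eq_zero fun i _ => (h i).2 _ (hg i)
  · exact ((hcomp hf i).sub (hcomp hPf i)).integrable_mul (hcomp hgL2 i)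

theorem statement3_general
    (E : Set Plane) (hEopen : IsOpen E) (hEbdd : Bornology.IsBounded E)
    (hEpos : 0 < volume E)
    (b : Plane → Plane) (bmax : ℝ) (hbmeas : Measurable b)
    (hbbdd : ∀ x ∈ E, ‖b x‖ ≤ bmax)
    (k : ℕ)
    (p : Plane → ℝ) (hp : MemLp p 2 (volume.restrict E))
    (q : Plane → ℝ) (hq : ContDiff ℝ 1 q)
    (Pp : Plane → ℝ) (Pgq Pbp : Plane → Plane) (Pbgq : Plane → ℝ)
    (hPp : IsL2Proj E (k - 1) p Pp)
    (hPgq : IsL2ProjV E (k - 1) (gradient q) Pgq)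
    (hPbp : IsL2ProjV E (k - 1) (fun x => p x • b x) Pbp)
    (hPbgq : IsL2Proj E (k - 1) (fun x => ⟪b x, gradient q x⟫) Pbgq) :
    (-∫ x in E, Pp x * ⟪b x, Pgq x⟫) - (-∫ x in E, p x * ⟪b x, gradient q x⟫) ≤
      errS E (fun x => ⟪b x, gradient q x⟫) Pbgq * errS E p Pp
        + errV E (gradient q) Pgq * errV E (fun x => p x • b x) Pbp
        + bmax * errV E (gradient q) Pgq * errS E p Pp := by
  have hL2 {F : Type} [NormedAddCommGroup F] {f : Plane → F} (hf : Continuous f) :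
      MemLp f 2 (volume.restrict E) :=
    hf.memLp_restrict_of_isBounded hEbdd 2
  have hbmax : 0 ≤ bmax := by
    obtain ⟨x, hx⟩ := nonempty_of_measure_ne_zero hEpos.ne'
    exact (norm_nonneg _).trans (hbbdd x hx)
  have hgrad : MemLp (gradient q) 2 (volume.restrict E) := hL2 (hq.continuous_gradient one_ne_zero)
  have hPgqL2 : MemLp Pgq 2 (volume.restrict E) := hL2 hPgq.continuous
  have hPbpL2 : MemLp Pbp 2 (volume.restrict E) := hL2 hPbp.continuous
  rw [neg_sub_neg]
  exact integral_mul_inner_sub_integral_mul_inner_le hbmax hbmeas.aestronglyMeasurable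
    (ae_restrict_of_forall_mem hEopen.measurableSet hbbdd) hp (hL2 hPp.1.continuous) hgrad
    hPgqL2 hPbpL2 (hL2 hPbgq.1.continuous) (hPp.2 _ hPbgq.1)
    (hPgq.integral_inner_eq_zero (fun i => (hPbp i).1) hgrad hPgqL2 hPbpL2)

/-- estimate (5.10) of the paper: for the convection forms
`b(p,q) = −∫_E p (b·∇q)` and `b_h(p,q) = −∫_E (Π⁰_{k−1} p)(b · Π⁰_{k−1}∇q)`,
`b_h(p,q) − b(p,q) ≤ ℰ_{k−1}(b·∇q)ℰ_{k−1}(p) + ℰ_{k−1}(∇q)ℰ_{k−1}(bp) + bmax ℰ_{k−1}(∇q)ℰ_{k−1}(p)`. -/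
theorem statement3
    (E : Set Plane) (hEopen : IsOpen E) (hEbdd : Bornology.IsBounded E)
    (hEpos : 0 < volume E)
    (b : Plane → Plane) (bmax : ℝ) (hbmeas : Measurable b)
    (hbbdd : ∀ x ∈ E, ‖b x‖ ≤ bmax)
    (k : ℕ) (hk : 1 ≤ k)
    (p : Plane → ℝ) (hp : MemLp p 2 (volume.restrict E))
    (q : Plane → ℝ) (hq : ContDiff ℝ 1 q)
    (Pp : Plane → ℝ) (Pgq Pbp : Plane → Plane) (Pbgq : Plane → ℝ)
    (hPp : IsL2Proj E (k - 1) p Pp)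
    (hPgq : IsL2ProjV E (k - 1) (gradient q) Pgq)
    (hPbp : IsL2ProjV E (k - 1) (fun x => p x • b x) Pbp)
    (hPbgq : IsL2Proj E (k - 1) (fun x => ⟪b x, gradient q x⟫) Pbgq) :
    (-∫ x in E, Pp x * ⟪b x, Pgq x⟫) - (-∫ x in E, p x * ⟪b x, gradient q x⟫) ≤
      errS E (fun x => ⟪b x, gradient q x⟫) Pbgq * errS E p Pp
        + errV E (gradient q) Pgq * errV E (fun x => p x • b x) Pbp
        + bmax * errV E (gradient q) Pgq * errS E p Pp :=
  statement3_general E hEopen hEbdd hEpos b bmax hbmeas hbbdd k p hp q hq Pp Pgq Pbp Pbgq hPp hPgq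
    hPbp hPbgq
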